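/- Under the standing assumptions (p an odd prime, v ∈ 𝔽_2^p a nonzero small vector with v_0 = 0 that works together with ê, and k the girth of v), let C ⊆ ℤ/pℤ be the vertex set of a directed cycle of length k in G_v, i.e. C = {c_1,…,c_k} with c_1,…,c_k distinct and v_{c_{t+1}−c_t} = 1 for all t (indices of c taken cyclically). Then for any i ∉ C, the number of j ∈ C with v_{j−i} = 1 plus the number of j ∈ C with v_{i−j} = 1 is at least 2 (i.e. there are at least two edges of G_v between i and C, ignoring direction). -/

import Mathlib

/-- The cyclic shift operator on `𝔽₂ⁿ` (indexed by `ZMod n`): `(cshift x) i = x (i - 1)`. -/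
def cshift {n : ℕ} (x : ZMod n → ZMod 2) : ZMod n → ZMod 2 := fun i => x (i - 1)

/-- The standard dot product over `𝔽₂`. -/
def dot {n : ℕ} [NeZero n] (v x : ZMod n → ZMod 2) : ZMod 2 := ∑ i, v i * x i

/-- A vector `v ∈ 𝔽₂ⁿ` works if for every `x` some cyclic shift of `x` is orthogonal to `v`. -/
def Works {n : ℕ} [NeZero n] (v : ZMod n → ZMod 2) : Prop :=
  ∀ x : ZMod n → ZMod 2, ∃ k : ℕ, dot v (cshift^[k] x) = 0

/-- Two vectors `v, w ∈ 𝔽₂ⁿ` work together if for every `x` there is a single cyclic shift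
of `x` orthogonal to both. -/
def WorkTogether2 {n : ℕ} [NeZero n] (v w : ZMod n → ZMod 2) : Prop :=
  ∀ x : ZMod n → ZMod 2, ∃ k : ℕ,
    dot v (cshift^[k] x) = 0 ∧ dot w (cshift^[k] x) = 0

/-- The vector `ê ∈ 𝔽₂ⁿ` with `ê 0 = 0` and `ê i = 1` for `i ≠ 0`. -/
def ehat (n : ℕ) : ZMod n → ZMod 2 := fun i => if i = 0 then 0 else 1

/-- A vector `v ∈ 𝔽₂ᵖ` is small if there is no `i` with `v i = v (-i) = 1`. -/
def IsSmall {n : ℕ} (v : ZMod n → ZMod 2) : Prop :=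
  ¬ ∃ i : ZMod n, v i = 1 ∧ v (-i) = 1

/-- The set `A = {i : v i = 1}` associated to a vector `v`. -/
def Asupp {n : ℕ} [NeZero n] (v : ZMod n → ZMod 2) : Finset (ZMod n) :=
  Finset.univ.filter fun i => v i = 1

/-- The girth of `v`: the least `m ≥ 1` such that `0` is a sum of `m` elements of
`A = {i : v i = 1}`; equivalently, the length of the shortest directed cycle in the Cayley
digraph `G_v` on `ℤ/nℤ` with an arc from `i` to `i + j` whenever `v j = 1`. -/
noncomputable def girth {n : ℕ} [NeZero n] (v : ZMod n → ZMod 2) : ℕ :=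
  sInf {m : ℕ | 0 < m ∧ ∃ f : Fin m → ZMod n, (∀ t, f t ∈ Asupp v) ∧ ∑ t, f t = 0}

/-!
Works-together, tested against the indicator of a set `S` of odd size (or of `-S`), gives a vertex
of `S` with even out-degree (or even in-degree) inside `S`. A cycle `C` of minimal length has no
chords, so each of its vertices has in- and out-degree `1` in `C`; hence `|C|` is even, and no
`z ∉ C` is joined to `C` by exactly one arc (look at `C ∪ {z}`). If `z` had no arc to `C`, move
the cycle one vertex at a time, by commuting consecutive letters of its word, so that it is
translated by multiples of one of its arcs, which generates `ℤ/pℤ`, until it passes through `z`.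
A single moved vertex adds at most one arc to `z` because `v` is small, so some intermediate
minimal cycle would have exactly one arc to `z`.
-/

open Finset

variable {p : ℕ} {v : ZMod p → ZMod 2}

lemma ZMod.eq_zero_of_ne_one_two {x : ZMod 2} (hx : x ≠ 1) : x = 0 := by
  revert x; decide

lemma sum_zmod_two_eq_card_filter {α : Type*} (s : Finset α) (f : α → ZMod 2) :
    ∑ a ∈ s, f a = #(s.filter fun a => f a = 1) := by
  rw [← sum_boole]
  refine sum_congr rfl fun a _ => ?_
  by_cases h : f a = 1
  · simp [h]
  · simp [ZMod.eq_zero_of_ne_one_two h]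

lemma ZMod.val_add_one_of_ne_zero {k : ℕ} [NeZero k] {t : ZMod k} (h : t + 1 ≠ 0) :
    (t + 1).val = t.val + 1 := by
  have hcast : ((t.val + 1 : ℕ) : ZMod k) = t + 1 := by
    push_cast; rw [ZMod.natCast_zmod_val]
  rcases (Nat.succ_le_of_lt (ZMod.val_lt t)).lt_or_eq with hlt | heq
  · rw [← hcast, ZMod.val_cast_of_lt hlt]
  · rw [← hcast, ← Nat.succ_eq_add_one, heq, ZMod.natCast_self] at h
    exact absurd rfl h

lemma cshift_iterate_apply (x : ZMod p → ZMod 2) (k : ℕ) (i : ZMod p) :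
    cshift^[k] x i = x (i - k) := by
  induction k generalizing i with
  | zero => simp
  | succ k ih =>
    rw [Function.iterate_succ_apply', cshift, ih]
    push_cast
    ring_nf

def OddSetsHaveEvenOutVertex (v : ZMod p → ZMod 2) : Prop :=
  ∀ S : Finset (ZMod p), Odd #S → ∃ u ∈ S, ∑ w ∈ S, v (w - u) = 0

lemma OddSetsHaveEvenOutVertex.comp_neg (hv : OddSetsHaveEvenOutVertex v) :
    OddSetsHaveEvenOutVertex fun x => v (-x) := by
  intro S hS
  obtain ⟨u, hu, hsum⟩ := hv (S.map (Equiv.neg _).toEmbedding) (by simpa using hS)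
  refine ⟨-u, by simpa using hu, ?_⟩
  rw [sum_map] at hsum
  simpa [sub_eq_add_neg, add_comm] using hsum

def edgeCount (v : ZMod p → ZMod 2) (z : ZMod p) (C : Finset (ZMod p)) : ℕ :=
  #(C.filter fun w => v (w - z) = 1) + #(C.filter fun w => v (z - w) = 1)

lemma OddSetsHaveEvenOutVertex.even_card_filter (hv : OddSetsHaveEvenOutVertex v)
    (h0 : v 0 = 0) {C : Finset (ZMod p)} (hC : Even #C)
    (hdeg : ∀ u ∈ C, ∑ w ∈ C, v (w - u) = 1) {z : ZMod p} (hz : z ∉ C)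
    (hin : ∀ u ∈ C, v (z - u) ≠ 1) : Even #(C.filter fun w => v (w - z) = 1) := by
  obtain ⟨u, hu, hsum⟩ := hv (insert z C) (by rw [card_insert_of_notMem hz]; exact hC.add_one)
  rw [sum_insert hz] at hsum
  rcases mem_insert.mp hu with rfl | hu
  · rwa [sub_self, h0, zero_add, sum_zmod_two_eq_card_filter,
      ZMod.natCast_eq_zero_iff_even] at hsum
  · rw [ZMod.eq_zero_of_ne_one_two (hin u hu), hdeg u hu, zero_add] at hsum
    exact absurd hsum one_ne_zero

lemma edgeCount_le_of_subset (z : ZMod p) {C D : Finset (ZMod p)} (h : C ⊆ D) :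
    edgeCount v z C ≤ edgeCount v z D :=
  add_le_add (card_le_card (filter_subset_filter _ h)) (card_le_card (filter_subset_filter _ h))

lemma IsSmall.edgeCount_insert_le (hs : IsSmall v) (z w : ZMod p) (C : Finset (ZMod p)) :
    edgeCount v z (insert w C) ≤ edgeCount v z C + 1 := by
  have hboth : ¬ (v (w - z) = 1 ∧ v (z - w) = 1) := fun h =>
    hs ⟨w - z, h.1, by rw [neg_sub]; exact h.2⟩
  have h1 := card_insert_le w (C.filter fun x => v (x - z) = 1)
  have h2 := card_insert_le w (C.filter fun x => v (z - x) = 1)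
  simp only [edgeCount, filter_insert]
  split_ifs with hout hin hin
  · exact absurd ⟨hout, hin⟩ hboth
  all_goals omega

def IsIsolatedFrom (v : ZMod p → ZMod 2) (z : ZMod p) (C : Finset (ZMod p)) : Prop :=
  z ∉ C ∧ edgeCount v z C = 0

def IsClosedWalk (v : ZMod p → ZMod 2) {k : ℕ} (E : ZMod k → ZMod p) : Prop :=
  ∀ t, v (E (t + 1) - E t) = 1

/-- The walk with the letters of `E` (the differences `E (t + 1) - E t`), except that the first
letter is moved to position `j`; the starting point `E 0` is kept. -/
def bubble {k : ℕ} (E : ZMod k → ZMod p) (j : ℕ) (t : ZMod k) : ZMod p :=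
  if t.val ≤ j then E (t + 1) - (E 1 - E 0) else E t

section Bubble

variable {k : ℕ} {E : ZMod k → ZMod p}

lemma IsClosedWalk.sub_const (hE : IsClosedWalk v E) (a : ZMod p) :
    IsClosedWalk v fun t => E t - a :=
  fun t => by simpa using hE t

lemma bubble_zero : bubble E 0 = E := by
  funext t
  by_cases ht : t = 0
  · simp [bubble, ht]
  · simp [bubble, ZMod.val_eq_zero, ht]

variable [NeZero k]

lemma IsClosedWalk.bubble (hE : IsClosedWalk v E) (j : ℕ) : IsClosedWalk v (bubble E j) := by
  intro t
  simp only [_root_.bubble]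
  split_ifs with h1 h2 h2
  · simpa using hE (t + 1)
  · have ht : t + 1 = 0 := by
      by_contra ht
      rw [ZMod.val_add_one_of_ne_zero ht] at h1
      omega
    have := hE t
    rw [ht] at this ⊢
    simpa using this
  · simpa using hE 0
  · exact hE t

lemma bubble_succ_of_ne {j : ℕ} {t : ZMod k} (ht : t ≠ (j + 1 : ℕ)) :
    bubble E (j + 1) t = bubble E j t := by
  have : t.val ≠ j + 1 := fun h => ht (by rw [← h, ZMod.natCast_zmod_val])
  simp only [bubble]
  congr 1
  exact propext (by omega)

lemma image_bubble_pred :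
    univ.image (bubble E (k - 1)) = univ.image fun t => E t - (E 1 - E 0) := by
  have hle : ∀ t : ZMod k, t.val ≤ k - 1 := fun t => Nat.le_pred_of_lt (ZMod.val_lt t)
  ext w
  simp only [bubble, hle, if_true, mem_image, mem_univ, true_and]
  constructor
  · rintro ⟨t, rfl⟩
    exact ⟨t + 1, rfl⟩
  · rintro ⟨t, rfl⟩
    exact ⟨t - 1, by simp⟩

end Bubble

variable [NeZero p]

lemma dot_cshift_iterate (w x : ZMod p → ZMod 2) (k : ℕ) :
    dot w (cshift^[k] x) = ∑ i, w (i + k) * x i := by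
  simp only [dot, cshift_iterate_apply]
  exact (Equiv.sum_comp (Equiv.addRight (k : ZMod p)) _).symm.trans (by simp)

/-- Test `x = 𝟙_S`: orthogonality to `ê` forces the shift to put a point of `S` at `0`,
and orthogonality to `v` then says that this point has even out-degree in `S`. -/
lemma WorkTogether2.oddSetsHaveEvenOutVertex (hwork : WorkTogether2 v (ehat p)) :
    OddSetsHaveEvenOutVertex v := by
  intro S hS
  obtain ⟨k, hv, he⟩ := hwork fun i => if i ∈ S then 1 else 0
  simp only [dot_cshift_iterate, mul_ite, mul_one, mul_zero, sum_ite_mem, univ_inter] at hv he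
  have hk : -(k : ZMod p) ∈ S := by
    by_contra hk
    have h1 : ∀ i ∈ S, ehat p (i + k) = 1 := fun i hi => by
      rw [ehat, if_neg]
      rintro h
      exact hk (by rwa [← eq_neg_iff_add_eq_zero.mpr h])
    rw [sum_congr rfl h1, sum_const, nsmul_one, ZMod.natCast_eq_zero_iff_even] at he
    exact Nat.not_even_iff_odd.mpr hS he
  exact ⟨_, hk, by simpa using hv⟩

lemma girth_pos (hv : v ≠ 0) : 0 < girth v := by
  obtain ⟨a, ha⟩ : ∃ a, v a = 1 := by
    by_contra! h
    exact hv (funext fun a => ZMod.eq_zero_of_ne_one_two (h a))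
  exact (Nat.sInf_mem (s := {m | 0 < m ∧ _}) ⟨p, NeZero.pos p, fun _ => a,
    fun _ => by simp [Asupp, ha], by simp⟩).1

lemma girth_le_of_sum_eq_zero {m : ℕ} (hm : 0 < m) (f : ℕ → ZMod p)
    (hf : ∀ i < m, v (f i) = 1) (hsum : ∑ i ∈ range m, f i = 0) : girth v ≤ m :=
  Nat.sInf_le ⟨hm, fun i : Fin m => f i, fun i => by simp [Asupp, hf i i.2],
    by rwa [Fin.sum_univ_eq_sum_range f]⟩

namespace IsClosedWalk

variable {k : ℕ} [NeZero k] {E E' : ZMod k → ZMod p}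

/-- A chord `s → t` closes up with the walk from `t` round to `s`. -/
lemma girth_le_of_chord (hE : IsClosedWalk v E) {s t : ZMod k} (h : v (E t - E s) = 1) :
    girth v ≤ (s - t).val + 1 := by
  let f : ℕ → ZMod p
    | 0 => E t - E s
    | i + 1 => E (t + (i + 1 : ℕ)) - E (t + i)
  refine girth_le_of_sum_eq_zero (Nat.succ_pos _) f (fun i _ => ?_) ?_
  · cases i with
    | zero => exact h
    | succ i => simpa [f, add_assoc] using hE (t + i)
  · rw [sum_range_succ', sum_range_sub (fun i : ℕ => E (t + i)), ZMod.natCast_zmod_val]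
    simp [f]

lemma eq_add_one_of_chord (hE : IsClosedWalk v E) (hk : girth v = k) {s t : ZMod k}
    (h : v (E t - E s) = 1) : t = s + 1 := by
  have hval : (s - t).val = k - 1 := by
    have := hE.girth_le_of_chord h
    have := ZMod.val_lt (s - t)
    omega
  have : s - t = -1 := by
    rw [← ZMod.natCast_zmod_val (s - t), hval, Nat.cast_pred (NeZero.pos k), ZMod.natCast_self,
      zero_sub]
  linear_combination -this

lemma injective (hE : IsClosedWalk v E) (hk : girth v = k) : Function.Injective E := by
  intro s t hst
  have h := hE s
  rw [hst] at h
  exact add_right_cancel (hE.eq_add_one_of_chord hk h)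

lemma apply_sub_apply (hE : IsClosedWalk v E) (hk : girth v = k) (s t : ZMod k) :
    v (E t - E s) = if t = s + 1 then 1 else 0 := by
  split_ifs with h
  · exact h ▸ hE s
  · exact ZMod.eq_zero_of_ne_one_two fun h' => h (hE.eq_add_one_of_chord hk h')

lemma sum_sub_apply (hE : IsClosedWalk v E) (hk : girth v = k) (s : ZMod k) :
    ∑ w ∈ univ.image E, v (w - E s) = 1 := by
  rw [sum_image fun _ _ _ _ h => hE.injective hk h]
  simp [hE.apply_sub_apply hk]

lemma sum_apply_sub (hE : IsClosedWalk v E) (hk : girth v = k) (s : ZMod k) :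
    ∑ w ∈ univ.image E, v (E s - w) = 1 := by
  rw [sum_image fun _ _ _ _ h => hE.injective hk h]
  simp_rw [hE.apply_sub_apply hk, eq_comm (a := s), ← eq_sub_iff_add_eq]
  simp

lemma even (hv : OddSetsHaveEvenOutVertex v) (hE : IsClosedWalk v E) (hk : girth v = k) :
    Even k := by
  by_contra hodd
  obtain ⟨u, hu, hsum⟩ := hv (univ.image E) (by
    rw [card_image_of_injective _ (hE.injective hk), card_univ, ZMod.card]
    exact Nat.not_even_iff_odd.mp hodd)
  obtain ⟨s, -, rfl⟩ := mem_image.mp hu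
  exact one_ne_zero ((hE.sum_sub_apply hk s).symm.trans hsum)

/-- If the only arc between `z` and the cycle is `z → w`, every vertex of the odd set
`insert z C` has odd out-degree in it; dually for an arc `w → z` and in-degrees. -/
lemma edgeCount_ne_one (hv : OddSetsHaveEvenOutVertex v) (h0 : v 0 = 0)
    (hE : IsClosedWalk v E) (hk : girth v = k) {z : ZMod p} (hz : z ∉ univ.image E) :
    edgeCount v z (univ.image E) ≠ 1 := by
  have hC : Even #(univ.image E) := by
    rw [card_image_of_injective _ (hE.injective hk), card_univ, ZMod.card]
    exact hE.even hv hk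
  have hout : #((univ.image E).filter fun w => v (z - w) = 1) = 0 →
      Even #((univ.image E).filter fun w => v (w - z) = 1) := fun h =>
    hv.even_card_filter h0 hC (fun u hu => by
      obtain ⟨s, -, rfl⟩ := mem_image.mp hu; exact hE.sum_sub_apply hk s) hz
      (filter_eq_empty_iff.mp (card_eq_zero.mp h))
  have hin : #((univ.image E).filter fun w => v (w - z) = 1) = 0 →
      Even #((univ.image E).filter fun w => v (z - w) = 1) := fun h => by
    simpa using hv.comp_neg.even_card_filter (by simpa using h0) hC (fun u hu => by
      obtain ⟨s, -, rfl⟩ := mem_image.mp hu; simpa using hE.sum_apply_sub hk s) hz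
      (by simpa using filter_eq_empty_iff.mp (card_eq_zero.mp h))
  simp only [edgeCount, Nat.even_iff] at hout hin ⊢
  omega

/-- Changing one vertex of the cycle adds at most one arc to `z` (`v` is small), and exactly
one is impossible. -/
lemma isIsolatedFrom_of_eqOn (hv : OddSetsHaveEvenOutVertex v) (h0 : v 0 = 0)
    (hsmall : IsSmall v) (hk : girth v = k) (hE' : IsClosedWalk v E') {s : ZMod k}
    (hEE' : ∀ t ≠ s, E' t = E t) {z : ZMod p} (hz : IsIsolatedFrom v z (univ.image E)) :
    IsIsolatedFrom v z (univ.image E') := by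
  obtain ⟨hz, hcount⟩ := hz
  have hsub : univ.image E' ⊆ insert (E' s) (univ.image E) := by
    intro w hw
    obtain ⟨t, -, rfl⟩ := mem_image.mp hw
    by_cases ht : t = s
    · exact ht ▸ mem_insert_self _ _
    · exact mem_insert_of_mem (hEE' t ht ▸ mem_image_of_mem E (mem_univ t))
  have hz' : z ∉ univ.image E' := by
    intro hmem
    obtain ⟨t, -, rfl⟩ := mem_image.mp hmem
    have hts : t = s := by
      by_contra hts
      exact hz (hEE' t hts ▸ mem_image_of_mem E (mem_univ t))
    have hsucc : t + 1 ≠ s := fun h => by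
      have := hE' t
      rw [h, ← hts, sub_self, h0] at this
      exact zero_ne_one this
    have harc := hE' t
    rw [hEE' _ hsucc] at harc
    have : 0 < edgeCount v (E' t) (univ.image E) :=
      Nat.add_pos_left (card_pos.mpr ⟨E (t + 1), by simpa using harc⟩) _
    omega
  refine ⟨hz', ?_⟩
  have := (edgeCount_le_of_subset z hsub).trans (hsmall.edgeCount_insert_le z (E' s) _)
  have := hE'.edgeCount_ne_one hv h0 hk hz'
  omega

lemma isIsolatedFrom_bubble (hv : OddSetsHaveEvenOutVertex v) (h0 : v 0 = 0)
    (hsmall : IsSmall v) (hE : IsClosedWalk v E) (hk : girth v = k) {z : ZMod p}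
    (hz : IsIsolatedFrom v z (univ.image E)) (j : ℕ) :
    IsIsolatedFrom v z (univ.image (_root_.bubble E j)) := by
  induction j with
  | zero => rwa [bubble_zero]
  | succ j ih =>
    exact isIsolatedFrom_of_eqOn hv h0 hsmall hk (hE.bubble (j + 1))
      (fun t ht => bubble_succ_of_ne ht) ih

/-- Bubbling the first letter of `E` to the end translates the cycle by `-(E 1 - E 0)`. -/
lemma isIsolatedFrom_sub_natCast_mul (hv : OddSetsHaveEvenOutVertex v) (h0 : v 0 = 0)
    (hsmall : IsSmall v) (hE : IsClosedWalk v E) (hk : girth v = k) {z : ZMod p}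
    (hz : IsIsolatedFrom v z (univ.image E)) (m : ℕ) :
    IsIsolatedFrom v z (univ.image fun t => E t - m * (E 1 - E 0)) := by
  induction m with
  | zero => simpa using hz
  | succ m ih =>
    have := isIsolatedFrom_bubble hv h0 hsmall (hE.sub_const _) hk ih (k - 1)
    rw [image_bubble_pred] at this
    convert this using 3 with t
    push_cast
    ring

lemma edgeCount_ne_zero (hp : p.Prime) (hv : OddSetsHaveEvenOutVertex v) (h0 : v 0 = 0)
    (hsmall : IsSmall v) (hE : IsClosedWalk v E) (hk : girth v = k) {z : ZMod p}
    (hz : z ∉ univ.image E) : edgeCount v z (univ.image E) ≠ 0 := by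
  intro hcount
  have := Fact.mk hp
  have hd : E 1 - E 0 ≠ 0 := fun hd => by
    have := hE 0
    rw [zero_add, hd, h0] at this
    exact zero_ne_one this
  apply (hE.isIsolatedFrom_sub_natCast_mul hv h0 hsmall hk ⟨hz, hcount⟩
    ((E 0 - z) / (E 1 - E 0)).val).1
  refine mem_image.mpr ⟨0, mem_univ _, ?_⟩
  simp [div_mul_cancel₀ _ hd]

end IsClosedWalk

theorem at_least_two_edges_to_cycle_general (p : ℕ) [NeZero p] (hp : p.Prime)
    (v : ZMod p → ZMod 2) (hv : v ≠ 0) (hsmall : IsSmall v) (h0 : v 0 = 0)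
    (hwork : WorkTogether2 v (ehat p))
    (c : Fin (girth v) → ZMod p)
    (hcyc : ∀ t : Fin (girth v), v (c (finRotate (girth v) t) - c t) = 1)
    (i : ZMod p) (hi : i ∉ Finset.univ.image c) :
    2 ≤ ((Finset.univ.image c).filter (fun j => v (j - i) = 1)).card +
        ((Finset.univ.image c).filter (fun j => v (i - j) = 1)).card := by
  obtain ⟨n, hn⟩ := Nat.exists_eq_add_one_of_ne_zero (girth_pos hv).ne'
  -- `Fin (n + 1)` is `ZMod (n + 1)`, so `c` becomes a closed walk indexed by `ZMod (n + 1)`.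
  revert c
  rw [hn]
  intro c hcyc hi
  have hE : IsClosedWalk (k := n + 1) v c := fun t => by
    have := hcyc t
    rwa [finRotate_apply (n := n + 1) t] at this
  have hQ := hwork.oddSetsHaveEvenOutVertex
  have h1 : edgeCount v i (univ.image c) ≠ 1 := hE.edgeCount_ne_one hQ h0 hn hi
  have h2 : edgeCount v i (univ.image c) ≠ 0 := hE.edgeCount_ne_zero hp hQ h0 hsmall hn hi
  change 2 ≤ edgeCount v i _
  omega

/-- Standing assumptions: `p` an odd prime, `v ∈ 𝔽₂ᵖ` a nonzero small vector with `v 0 = 0`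
working together with `ê`, and `k` the girth of `v`. Let `C ⊆ ℤ/pℤ` be the vertex set of a
directed cycle of length `k` in `G_v`, i.e. `C = {c 0, …, c (k-1)}` with the `c t` distinct
and `v (c (t+1) - c t) = 1` for every `t` (cyclically). Then for any `i ∉ C`, the number of
`j ∈ C` with `v (j - i) = 1` plus the number of `j ∈ C` with `v (i - j) = 1` is at least
`2`; i.e. there are at least two edges of `G_v` between `i` and `C`, ignoring direction. -/
theorem at_least_two_edges_to_cycle (p : ℕ) [NeZero p] (hp : p.Prime) (hodd : Odd p)
    (v : ZMod p → ZMod 2) (hv : v ≠ 0) (hsmall : IsSmall v) (h0 : v 0 = 0)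
    (hwork : WorkTogether2 v (ehat p))
    (c : Fin (girth v) → ZMod p) (hinj : Function.Injective c)
    (hcyc : ∀ t : Fin (girth v), v (c (finRotate (girth v) t) - c t) = 1)
    (i : ZMod p) (hi : i ∉ Finset.univ.image c) :
    2 ≤ ((Finset.univ.image c).filter (fun j => v (j - i) = 1)).card +
        ((Finset.univ.image c).filter (fun j => v (i - j) = 1)).card :=
  at_least_two_edges_to_cycle_general p hp v hv hsmall h0 hwork c hcyc i hi
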